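/- arXiv:2104.11330 — 4 statements merged into one kernel-verified Lean document; each statement's English description precedes it below -/
import Mathlib

section
/- If A = {a_1 < ... < a_N} is an s-convex set with s ≥ 1, then for every h with 1 ≤ h < N, the h-difference set Δ_h A := {a_{i+h} - a_i : 1 ≤ i ≤ N - h} has exactly N - h elements (all such differences are distinct) and forms an (s-1)-convex set. -/
/-- `s`-convex finite sequences (of length `N`), defined inductively. -/
def SConvexSeq : ℕ → ℕ → (ℕ → ℝ) → Prop
  | 0, N, a => (∀ i j, i < j → j < N → a i < a j) ∨ (∀ i j, i < j → j < N → a j < a i)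
  | s + 1, N, a =>
      ((∀ i j, i < j → j < N → a i < a j) ∨ (∀ i j, i < j → j < N → a j < a i)) ∧
        SConvexSeq s (N - 1) (fun i => a (i + 1) - a i)

lemma sconvex_of_le_one : ∀ (s N : ℕ) (a : ℕ → ℝ), N ≤ 1 → SConvexSeq s N a := by
  intro s
  induction s with
  | zero =>
    intro N a hN
    exact Or.inl (fun i j hij hjN => by omega)
  | succ s ih =>
    intro N a hN
    exact ⟨Or.inl (fun i j hij hjN => by omega), ih _ _ (by omega)⟩

lemma mono_of_succ (f : ℕ → ℝ) (M : ℕ) (hf : ∀ i, i + 1 < M → f i < f (i + 1)) :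
    ∀ i j, i < j → j < M → f i < f j := by
  intro i j hij hjM
  induction j with
  | zero => omega
  | succ j ih =>
    rcases Nat.lt_succ_iff_lt_or_eq.mp hij with h' | h'
    · exact (ih h' (by omega)).trans (hf j hjM)
    · subst h'; exact hf i hjM

lemma sconvex_head (s N : ℕ) (a : ℕ → ℝ) (h : SConvexSeq s N a) :
    (∀ i j, i < j → j < N → a i < a j) ∨ (∀ i j, i < j → j < N → a j < a i) := by
  cases s with
  | zero => exact h
  | succ s => exact h.1

/-- If the consecutive differences of `a` are strictly monotone (or strictly
antitone), then the `h`-difference sequence is strictly monotone (or antitone). -/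
lemma diff_disj (N h : ℕ) (a : ℕ → ℝ) (hh1 : 1 ≤ h)
    (hb : (∀ i j, i < j → j < N - 1 → a (i + 1) - a i < a (j + 1) - a j) ∨
          (∀ i j, i < j → j < N - 1 → a (j + 1) - a j < a (i + 1) - a i)) :
    (∀ i j, i < j → j < N - h → a (i + h) - a i < a (j + h) - a j) ∨
      (∀ i j, i < j → j < N - h → a (j + h) - a j < a (i + h) - a i) := by
  have key : ∀ i, i + 1 < N - h →
      (a (i + 1 + h) - a (i + 1)) - (a (i + h) - a i)
        = (a (i + h + 1) - a (i + h)) - (a (i + 1) - a i) := by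
    intro i _
    rw [show i + 1 + h = i + h + 1 from by omega]
    ring
  rcases hb with hb | hb
  · left
    exact mono_of_succ (fun i => a (i + h) - a i) (N - h) (fun i hi => by
      have h1 : a (i + 1) - a i < a (i + h + 1) - a (i + h) :=
        hb i (i + h) (by omega) (by omega)
      have := key i hi
      linarith)
  · right
    intro i j hij hjN
    exact mono_of_succ (fun i => -(a (i + h) - a i)) (N - h) (fun i hi => by
      have h1 : a (i + h + 1) - a (i + h) < a (i + 1) - a i :=
        hb i (i + h) (by omega) (by omega)
      have := key i hi
      linarith) i j hij hjN |> neg_lt_neg_iff.mp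

lemma key_lemma : ∀ (s N : ℕ) (a : ℕ → ℝ), SConvexSeq (s + 1) N a →
    ∀ h, 1 ≤ h → h < N → SConvexSeq s (N - h) (fun i => a (i + h) - a i) := by
  intro s
  induction s with
  | zero =>
    intro N a hA h hh1 hh2
    exact diff_disj N h a hh1 hA.2
  | succ s ih =>
    intro N a hA h hh1 hh2
    refine ⟨diff_disj N h a hh1 (sconvex_head _ _ _ hA.2), ?_⟩
    by_cases hc : h < N - 1
    · have := ih (N - 1) (fun i => a (i + 1) - a i) hA.2 h hh1 hc
      have heq : N - 1 - h = N - h - 1 := by omega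
      rw [heq] at this
      convert this using 2 with i
      simp only
      rw [show i + 1 + h = i + h + 1 from by omega]
      ring
    · exact sconvex_of_le_one _ _ _ (by omega)

/-- if `a` enumerates an `s`-convex set of `N` reals with `s ≥ 1`,
then for `1 ≤ h < N` the `h`-differences `a (i+h) - a i`, `i < N - h`, are
pairwise distinct (so `Δ_h A` has exactly `N - h` elements) and form an
`(s-1)`-convex set. -/
theorem stmt4 (s : ℕ) (hs : 1 ≤ s) (N : ℕ) (a : ℕ → ℝ) (hA : SConvexSeq s N a)
    (h : ℕ) (hh1 : 1 ≤ h) (hh2 : h < N) :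
    (∀ i j, i < N - h → j < N - h → a (i + h) - a i = a (j + h) - a j → i = j) ∧
      SConvexSeq (s - 1) (N - h) (fun i => a (i + h) - a i) := by
  obtain ⟨t, rfl⟩ : ∃ t, s = t + 1 := ⟨s - 1, by omega⟩
  have hkey := key_lemma t N a hA h hh1 hh2
  refine ⟨?_, hkey⟩
  have hdisj := sconvex_head _ _ _ hkey
  intro i j hi hj heq
  rcases lt_trichotomy i j with hij | hij | hij
  · rcases hdisj with hd | hd
    · exact absurd heq (ne_of_lt (hd i j hij hj))
    · exact absurd heq (ne_of_gt (hd i j hij hj))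
  · exact hij
  · rcases hdisj with hd | hd
    · exact absurd heq (ne_of_gt (hd j i hij hi))
    · exact absurd heq (ne_of_lt (hd j i hij hi))
end

section
/- Let B be a finite set of reals, and let D = {d_1 < d_2 < ... < d_m} be the set of positive elements of the difference set B - B. For b, b' ∈ B with b > b', let n_B(b', b) denote the number of elements of B + B - B lying in the interval (b', b]. If n_B(b', b) ≤ Z for some positive integer Z ≤ m, then b - b' ≤ d_Z; in particular, b - b' is one of the Z smallest positive differences d_1, ..., d_Z. -/
open scoped Pointwise

/-! Translating by `b'` sends every `d ∈ B - B` with `0 < d ≤ b - b'` to `b' + d ∈ B + B - B`, which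
lies in `(b', b]`; translation is injective, so there are at most `n_B(b', b) ≤ Z` such `d`. -/

namespace Finset

variable {G : Type*} [AddCommGroup G] [LinearOrder G] [IsOrderedAddMonoid G]

theorem map_addLeft_filter_sub_subset (B : Finset G) {a : G} (ha : a ∈ B) (c : G) :
    ((B - B).filter (fun d => 0 < d ∧ d ≤ c)).map (addLeftEmbedding a) ⊆
      (B + B - B).filter (fun x => a < x ∧ x ≤ a + c) := by
  intro x hx
  simp only [mem_map, mem_filter, addLeftEmbedding_apply] at hx
  obtain ⟨d, ⟨hd, hd_pos, hd_le⟩, rfl⟩ := hx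
  obtain ⟨y, hy, z, hz, rfl⟩ := mem_sub.mp hd
  refine mem_filter.mpr ⟨mem_sub.mpr ⟨a + y, add_mem_add ha hy, z, hz, by abel⟩, ?_, ?_⟩
  · exact lt_add_of_pos_right a hd_pos
  · exact add_le_add_right hd_le a

theorem card_filter_sub_le_card_filter_add_sub (B : Finset G) {a : G} (ha : a ∈ B) (c : G) :
    ((B - B).filter (fun d => 0 < d ∧ d ≤ c)).card ≤
      ((B + B - B).filter (fun x => a < x ∧ x ≤ a + c)).card := by
  rw [← card_map (addLeftEmbedding a)]
  exact card_le_card (map_addLeft_filter_sub_subset B ha c)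

end Finset

theorem stmt6_general (B : Finset ℝ) (b b' : ℝ) (hb' : b' ∈ B)
    (Z : ℕ)
    (hn : ((B + B - B).filter (fun x => b' < x ∧ x ≤ b)).card ≤ Z) :
    ((B - B).filter (fun d => 0 < d ∧ d ≤ b - b')).card ≤ Z := by
  have h := Finset.card_filter_sub_le_card_filter_add_sub B hb' (b - b')
  rw [add_sub_cancel] at h
  exact h.trans hn

/-- let `D = {d_1 < ⋯ < d_m}` be the positive elements of `B - B`.
If `b, b' ∈ B`, `b' < b`, `1 ≤ Z ≤ m`, and the number of elements of
`B + B - B` in `(b', b]` is at most `Z`, then `b - b' ≤ d_Z`, i.e. at most `Z`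
positive differences in `B - B` are `≤ b - b'`. -/
theorem stmt6 (B : Finset ℝ) (b b' : ℝ) (hb : b ∈ B) (hb' : b' ∈ B) (hlt : b' < b)
    (Z : ℕ) (hZ1 : 1 ≤ Z)
    (hZm : Z ≤ ((B - B).filter (fun d => 0 < d)).card)
    (hn : ((B + B - B).filter (fun x => b' < x ∧ x ≤ b)).card ≤ Z) :
    ((B - B).filter (fun d => 0 < d ∧ d ≤ b - b')).card ≤ Z :=
  stmt6_general B b b' hb' Z hn
end

section
/- Let A be a convex set of N real numbers. Then the additive energy satisfies E(A) ≤ C · N^{5/2} for some absolute constant C, where E(A) is the number of quadruples (a_1, a_2, a_1', a_2') ∈ A^4 with a_1 + a_2 = a_1' + a_2'. -/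
/-!
Write `A = {a₀ < ⋯ < a_{n-1}}`. A solution of `x + y = z + w` with `x < z` is a pair of chords
`(x, z)`, `(w, y)` with the same difference, so `E(A) ≤ n² + 2 ∑_w r(w)`, where `r(w)` is the
number of chords with the same difference as `w`; and `∑_w r(w) = ∑_k M_k` with
`M_k = #{w | r(w) ≥ k}`.

Convexity makes `i ↦ a_{i+g} - a_i` strictly increasing for every gap `g`, so the
representations of a difference `t` have distinct gaps, and ordered by gap they form a
staircase along which both endpoints strictly decrease. The steps of this staircase have total
length at most `2n`, so if `t` has at least `k` representations, at least a quarter of them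
start a step of length at most `8n/k`. A short step is determined by its lower corner and its
two increments, so there are at most `n (8n/k)²` of them altogether, and `M_k ≤ 256 n³/k²`.
Using `M_k ≤ n²` for `k ≤ √n` instead gives `∑_k M_k ≤ 513 n^{5/2}`.
-/

/-- A finite set of reals is convex if, listed in increasing order, its
consecutive differences are strictly increasing. -/
def IsConvexFinset (A : Finset ℝ) : Prop :=
  ∃ a : ℕ → ℝ,
    (∀ i j, i < j → j < A.card → a i < a j) ∧
    (∀ i, i + 2 < A.card → a (i + 1) - a i < a (i + 2) - a (i + 1)) ∧
    A = (Finset.range A.card).image a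

open Finset

namespace ConvexEnergy

theorem sum_sub_le_of_pairwiseDisjoint_Ico {ι : Type*} {s : Finset ι} {l r : ι → ℕ} {n : ℕ}
    (hdisj : (s : Set ι).PairwiseDisjoint fun i => Ico (l i) (r i)) (hr : ∀ i ∈ s, r i ≤ n) :
    ∑ i ∈ s, (r i - l i) ≤ n :=
  calc ∑ i ∈ s, (r i - l i) = #(s.biUnion fun i => Ico (l i) (r i)) := by
        simp only [card_biUnion hdisj, Nat.card_Ico]
    _ ≤ #(range n) := card_le_card fun x hx => by
        obtain ⟨i, hi, hx⟩ := mem_biUnion.mp hx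
        have := hr i hi
        rw [mem_Ico] at hx
        rw [mem_range]
        omega
    _ = n := card_range n

theorem card_filter_lt_mul_le_sum {ι : Type*} (s : Finset ι) (f : ι → ℕ) (c : ℕ) :
    #{i ∈ s | c < f i} * c ≤ ∑ i ∈ s, f i :=
  calc #{i ∈ s | c < f i} * c ≤ ∑ i ∈ s with c < f i, f i := by
        simpa using card_nsmul_le_sum _ f c fun i hi => (mem_filter.mp hi).2.le
    _ ≤ ∑ i ∈ s, f i := sum_le_sum_of_subset (filter_subset _ s)

theorem sum_eq_sum_card_filter_le {ι : Type*} (s : Finset ι) (f : ι → ℕ) {n : ℕ}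
    (hf : ∀ i ∈ s, f i ≤ n) : ∑ i ∈ s, f i = ∑ k ∈ Icc 1 n, #{i ∈ s | k ≤ f i} := by
  simp_rw [card_filter]
  rw [sum_comm]
  refine sum_congr rfl fun i hi => ?_
  have := hf i hi
  rw [← card_filter, show {k ∈ Icc 1 n | k ≤ f i} = Icc 1 (f i) by
    ext; simp only [mem_filter, mem_Icc]; omega]
  simp

structure IsConvexSeq (n : ℕ) (a : ℕ → ℝ) : Prop where
  strictMonoOn : StrictMonoOn a (Set.Iio n)
  step_lt_step : ∀ i, i + 2 < n → a (i + 1) - a i < a (i + 2) - a (i + 1)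

namespace IsConvexSeq

variable {n : ℕ} {a : ℕ → ℝ}

theorem step_lt_step_of_lt (h : IsConvexSeq n a) {i j : ℕ} (hij : i < j) (hj : j + 1 < n) :
    a (i + 1) - a i < a (j + 1) - a j := by
  induction j, hij using Nat.le_induction with
  | base => exact h.step_lt_step i hj
  | succ j hij ih => exact (ih (by omega)).trans (h.step_lt_step j hj)

theorem shift_lt_shift (h : IsConvexSeq n a) {i i' g : ℕ} (hii' : i < i') (hg : 0 < g)
    (hi' : i' + g < n) : a (i + g) - a i < a (i' + g) - a i' := by
  induction g, hg using Nat.le_induction with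
  | base => exact h.step_lt_step_of_lt hii' hi'
  | succ g hg ih =>
    have := h.step_lt_step_of_lt (i := i + g) (j := i' + g) (by omega) (by omega)
    rw [← add_assoc, ← add_assoc]
    linarith [ih (by omega)]

theorem eq_of_shift_eq (h : IsConvexSeq n a) {i i' g : ℕ} (hg : 0 < g) (hi : i + g < n)
    (hi' : i' + g < n) (heq : a (i + g) - a i = a (i' + g) - a i') : i = i' := by
  rcases lt_trichotomy i i' with hlt | rfl | hgt
  · exact absurd heq (h.shift_lt_shift hlt hg hi').ne
  · rfl
  · exact absurd heq (h.shift_lt_shift hgt hg hi).ne'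

end IsConvexSeq

def chords (n : ℕ) : Finset (ℕ × ℕ) := {w ∈ range n ×ˢ range n | w.1 < w.2}

def gap (w : ℕ × ℕ) : ℕ := w.2 - w.1

def diff (a : ℕ → ℝ) (w : ℕ × ℕ) : ℝ := a w.2 - a w.1

theorem mem_chords {n : ℕ} {w : ℕ × ℕ} : w ∈ chords n ↔ w.1 < w.2 ∧ w.2 < n := by
  simp only [chords, mem_filter, mem_product, mem_range]
  omega

namespace IsConvexSeq

variable {n : ℕ} {a : ℕ → ℝ} {w w' : ℕ × ℕ}

theorem eq_of_diff_eq_of_gap_eq (h : IsConvexSeq n a) (hw : w ∈ chords n) (hw' : w' ∈ chords n)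
    (hd : diff a w = diff a w') (hg : gap w = gap w') : w = w' := by
  obtain ⟨i, j⟩ := w
  obtain ⟨i', j'⟩ := w'
  simp only [mem_chords, gap, diff] at hw hw' hd hg
  obtain ⟨g, rfl⟩ := Nat.exists_eq_add_of_le hw.1.le
  obtain rfl : j' = i' + g := by omega
  obtain rfl : i = i' := h.eq_of_shift_eq (by omega) hw.2 hw'.2 hd
  rfl

theorem staircase (h : IsConvexSeq n a) (hw : w ∈ chords n) (hw' : w' ∈ chords n)
    (hd : diff a w = diff a w') (hg : gap w < gap w') : w'.1 < w.1 ∧ w'.2 < w.2 := by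
  obtain ⟨i, j⟩ := w
  obtain ⟨i', j'⟩ := w'
  simp only [mem_chords, gap, diff] at hw hw' hd hg ⊢
  obtain ⟨g, rfl⟩ := Nat.exists_eq_add_of_le hw.1.le
  have hi : i' < i := by
    -- otherwise the chord `(i', i' + g)` lies strictly inside `w'` yet has difference `≥ t`
    by_contra! hle
    have hshift : a (i + g) - a i ≤ a (i' + g) - a i' := by
      rcases hle.eq_or_lt with rfl | hlt
      · rfl
      · exact (h.shift_lt_shift hlt (by omega) (by omega)).le
    have : a (i' + g) < a j' :=
      h.strictMonoOn (by simp only [Set.mem_Iio]; omega) hw'.2 (by omega)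
    linarith
  refine ⟨hi, (h.strictMonoOn.lt_iff_lt hw'.2 hw.2).mp ?_⟩
  have hii : i' < n ∧ i < n := by omega
  linarith [h.strictMonoOn hii.1 hii.2 hi]

end IsConvexSeq

noncomputable def reps (n : ℕ) (a : ℕ → ℝ) (t : ℝ) : Finset (ℕ × ℕ) :=
  {w ∈ chords n | diff a w = t}

noncomputable def steps (n : ℕ) (a : ℕ → ℝ) (t : ℝ) : Finset ((ℕ × ℕ) × (ℕ × ℕ)) :=
  {q ∈ reps n a t ×ˢ reps n a t |
    gap q.1 < gap q.2 ∧ ∀ w ∈ reps n a t, gap q.1 < gap w → gap q.2 ≤ gap w}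

def size (q : (ℕ × ℕ) × (ℕ × ℕ)) : ℕ := (q.1.1 - q.2.1) + (q.1.2 - q.2.2)

theorem mem_reps {n : ℕ} {a : ℕ → ℝ} {t : ℝ} {w : ℕ × ℕ} :
    w ∈ reps n a t ↔ w ∈ chords n ∧ diff a w = t :=
  mem_filter

namespace IsConvexSeq

variable {n : ℕ} {a : ℕ → ℝ} {t : ℝ} {w w' : ℕ × ℕ}

theorem eq_of_mem_reps (h : IsConvexSeq n a) (hw : w ∈ reps n a t) (hw' : w' ∈ reps n a t)
    (hg : gap w = gap w') : w = w' :=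
  h.eq_of_diff_eq_of_gap_eq (mem_reps.mp hw).1 (mem_reps.mp hw').1
    ((mem_reps.mp hw).2.trans (mem_reps.mp hw').2.symm) hg

theorem lt_of_mem_reps (h : IsConvexSeq n a) (hw : w ∈ reps n a t) (hw' : w' ∈ reps n a t)
    (hg : gap w < gap w') : w'.1 < w.1 ∧ w'.2 < w.2 :=
  h.staircase (mem_reps.mp hw).1 (mem_reps.mp hw').1
    ((mem_reps.mp hw).2.trans (mem_reps.mp hw').2.symm) hg

theorem le_of_mem_reps (h : IsConvexSeq n a) (hw : w ∈ reps n a t) (hw' : w' ∈ reps n a t)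
    (hg : gap w ≤ gap w') : w'.1 ≤ w.1 ∧ w'.2 ≤ w.2 := by
  rcases hg.eq_or_lt with hg | hg
  · rw [h.eq_of_mem_reps hw hw' hg]
    exact ⟨le_rfl, le_rfl⟩
  · exact (h.lt_of_mem_reps hw hw' hg).imp le_of_lt le_of_lt

theorem card_reps_le (h : IsConvexSeq n a) (t : ℝ) : #(reps n a t) ≤ n := by
  simpa using card_le_card_of_injOn gap (t := range n)
    (fun w hw => by
      have := mem_chords.mp (mem_reps.mp hw).1
      simp only [coe_range, Set.mem_Iio, gap]
      omega)
    (fun _ hw _ hw' hg => h.eq_of_mem_reps hw hw' hg)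

theorem card_reps_le_card_steps_add_one (h : IsConvexSeq n a) (t : ℝ) :
    #(reps n a t) ≤ #(steps n a t) + 1 := by
  rcases (reps n a t).eq_empty_or_nonempty with hR | hR
  · simp [hR]
  obtain ⟨m, hm, hmax⟩ := exists_max_image _ gap hR
  have hsub : (reps n a t).erase m ⊆ (steps n a t).image Prod.fst := by
    intro w hw
    obtain ⟨hwm, hw⟩ := mem_erase.mp hw
    have hlt : gap w < gap m := (hmax w hw).lt_of_ne fun hg => hwm (h.eq_of_mem_reps hw hm hg)
    obtain ⟨w', hw', hmin⟩ := exists_min_image {x ∈ reps n a t | gap w < gap x} gap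
      ⟨m, mem_filter.mpr ⟨hm, hlt⟩⟩
    obtain ⟨hw'R, hw'gap⟩ := mem_filter.mp hw'
    refine mem_image.mpr ⟨(w, w'), mem_filter.mpr ⟨mem_product.mpr ⟨hw, hw'R⟩, hw'gap, ?_⟩, rfl⟩
    exact fun x hx hgx => hmin x (mem_filter.mpr ⟨hx, hgx⟩)
  have := card_le_card hsub
  rw [card_erase_of_mem hm] at this
  have := card_image_le (s := steps n a t) (f := Prod.fst)
  omega

theorem mem_steps {q : (ℕ × ℕ) × (ℕ × ℕ)} : q ∈ steps n a t ↔ q.1 ∈ reps n a t ∧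
    q.2 ∈ reps n a t ∧ gap q.1 < gap q.2 ∧ ∀ w ∈ reps n a t, gap q.1 < gap w → gap q.2 ≤ gap w := by
  simp only [steps, mem_filter, mem_product, and_assoc]

theorem lt_of_mem_steps (h : IsConvexSeq n a) {q : (ℕ × ℕ) × (ℕ × ℕ)} (hq : q ∈ steps n a t) :
    q.2.1 < q.1.1 ∧ q.2.2 < q.1.2 :=
  h.lt_of_mem_reps (mem_steps.mp hq).1 (mem_steps.mp hq).2.1 (mem_steps.mp hq).2.2.1

theorem steps_separated (h : IsConvexSeq n a) {q q' : (ℕ × ℕ) × (ℕ × ℕ)}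
    (hq : q ∈ steps n a t) (hq' : q' ∈ steps n a t) (hne : q ≠ q') (hg : gap q.1 ≤ gap q'.1) :
    q'.1.1 ≤ q.2.1 ∧ q'.1.2 ≤ q.2.2 := by
  obtain ⟨hq1, hq2, hqg, hqmin⟩ := mem_steps.mp hq
  obtain ⟨hq'1, hq'2, hq'g, hq'min⟩ := mem_steps.mp hq'
  rcases hg.eq_or_lt with hg | hg
  · have h1 : q.1 = q'.1 := h.eq_of_mem_reps hq1 hq'1 hg
    have h2 : q.2 = q'.2 := h.eq_of_mem_reps hq2 hq'2
      (le_antisymm (hqmin _ hq'2 (by omega)) (hq'min _ hq2 (by omega)))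
    exact absurd (Prod.ext h1 h2) hne
  · exact h.le_of_mem_reps hq2 hq'1 (hqmin _ hq'1 hg)

theorem sum_size_steps_le (h : IsConvexSeq n a) (t : ℝ) :
    ∑ q ∈ steps n a t, size q ≤ 2 * n := by
  have hsep : ∀ q ∈ steps n a t, ∀ q' ∈ steps n a t, q ≠ q' →
      (q'.1.1 ≤ q.2.1 ∧ q'.1.2 ≤ q.2.2) ∨ (q.1.1 ≤ q'.2.1 ∧ q.1.2 ≤ q'.2.2) := by
    intro q hq q' hq' hne
    rcases le_total (gap q.1) (gap q'.1) with hg | hg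
    · exact .inl (h.steps_separated hq hq' hne hg)
    · exact .inr (h.steps_separated hq' hq hne.symm hg)
  have hlt : ∀ q ∈ steps n a t, q.1.1 < n ∧ q.1.2 < n := fun q hq => by
    have := mem_chords.mp (mem_reps.mp (mem_steps.mp hq).1).1
    omega
  have h1 : ∑ q ∈ steps n a t, (q.1.1 - q.2.1) ≤ n :=
    sum_sub_le_of_pairwiseDisjoint_Ico (fun q hq q' hq' hne => by
      simp only [Function.onFun, disjoint_left, mem_Ico]
      rcases hsep q hq q' hq' hne with h | h <;> omega) fun q hq => (hlt q hq).1.le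
  have h2 : ∑ q ∈ steps n a t, (q.1.2 - q.2.2) ≤ n :=
    sum_sub_le_of_pairwiseDisjoint_Ico (fun q hq q' hq' hne => by
      simp only [Function.onFun, disjoint_left, mem_Ico]
      rcases hsep q hq q' hq' hne with h | h <;> omega) fun q hq => (hlt q hq).2.le
  simp only [size, sum_add_distrib]
  omega

theorem card_reps_le_four_mul_card_short_steps (h : IsConvexSeq n a) {k : ℕ} (hk : 2 ≤ k)
    (hkR : k ≤ #(reps n a t)) : #(reps n a t) ≤ 4 * #{q ∈ steps n a t | k * size q ≤ 8 * n} := by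
  have hn : 0 < n := by have := h.card_reps_le t; omega
  have hmarkov : #{q ∈ steps n a t | 8 * n < k * size q} * (8 * n) ≤ k * (2 * n) :=
    (card_filter_lt_mul_le_sum _ _ _).trans
      (by rw [← mul_sum]; exact Nat.mul_le_mul_left k (h.sum_size_steps_le t))
  have hlong : 4 * #{q ∈ steps n a t | 8 * n < k * size q} ≤ k :=
    Nat.le_of_mul_le_mul_right (c := 2 * n) (by linarith) (by omega)
  have hsplit := card_filter_add_card_filter_not (s := steps n a t) (fun q => 8 * n < k * size q)
  simp only [not_lt] at hsplit
  have := h.card_reps_le_card_steps_add_one t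
  omega

end IsConvexSeq

noncomputable def mult (n : ℕ) (a : ℕ → ℝ) (w : ℕ × ℕ) : ℕ := #(reps n a (diff a w))

noncomputable def shortSteps (n : ℕ) (a : ℕ → ℝ) (k : ℕ) : Finset ((ℕ × ℕ) × (ℕ × ℕ)) :=
  {q ∈ chords n ×ˢ chords n |
    diff a q.2 = diff a q.1 ∧ q.2.1 < q.1.1 ∧ q.2.2 < q.1.2 ∧ k * size q ≤ 8 * n}

namespace IsConvexSeq

variable {n : ℕ} {a : ℕ → ℝ}

/-- A short step is determined by where it starts, `q.2.1`, and by its two coordinate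
increments: these fix `q.1.1` and the common difference `a q.1.1 - a q.2.1` of the chords
`(q.2.1, q.1.1)` and `(q.2.2, q.1.2)`, and a chord is determined by its difference and gap. -/
theorem card_shortSteps_le (h : IsConvexSeq n a) {k : ℕ} (hk : 0 < k) :
    #(shortSteps n a k) ≤ n * (8 * n / k) ^ 2 := by
  set L := 8 * n / k
  have hmaps : ∀ q ∈ shortSteps n a k, (q.2.1, q.1.1 - q.2.1, q.1.2 - q.2.2) ∈
      range n ×ˢ Icc 1 L ×ˢ Icc 1 L := by
    intro q hq
    obtain ⟨hq, -, h1, h2, hshort⟩ := mem_filter.mp hq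
    have := mem_chords.mp (mem_product.mp hq).1
    have hL : ∀ m, m ≤ size q → m ≤ L := fun m hm =>
      (Nat.le_div_iff_mul_le hk).mpr (by nlinarith)
    simp only [mem_product, mem_range, mem_Icc]
    refine ⟨by omega, ⟨by omega, hL _ (by simp only [size]; omega)⟩, by omega,
      hL _ (by simp only [size]; omega)⟩
  have hinj : Set.InjOn (fun q : (ℕ × ℕ) × (ℕ × ℕ) => (q.2.1, q.1.1 - q.2.1, q.1.2 - q.2.2))
      (shortSteps n a k) := by
    intro ⟨⟨x, y⟩, z, u⟩ hq ⟨⟨x', y'⟩, z', u'⟩ hq' heq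
    rw [mem_coe, shortSteps, mem_filter] at hq hq'
    simp only [mem_product, mem_chords, diff] at hq hq'
    simp only [Prod.mk.injEq] at heq ⊢
    obtain ⟨rfl, e2, e3⟩ := heq
    obtain rfl : x = x' := by omega
    obtain ⟨g, rfl⟩ := Nat.exists_eq_add_of_le hq.2.2.2.1.le
    obtain rfl : y' = u' + g := by omega
    have : u = u' := h.eq_of_shift_eq (g := g) (by omega) hq.1.1.2 hq'.1.1.2 (by linarith)
    omega
  simpa [sq] using card_le_card_of_injOn _ hmaps hinj

theorem card_mult_ge_le (h : IsConvexSeq n a) {k : ℕ} (hk : 2 ≤ k) :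
    #{w ∈ chords n | k ≤ mult n a w} ≤ 4 * #(shortSteps n a k) := by
  set H := {w ∈ chords n | k ≤ mult n a w}
  set T := H.image (diff a)
  have hT : ∀ t ∈ T, k ≤ #(reps n a t) := by
    intro t ht
    obtain ⟨w, hw, rfl⟩ := mem_image.mp ht
    exact (mem_filter.mp hw).2
  have hfiber : ∀ t ∈ T, {q ∈ steps n a t | k * size q ≤ 8 * n} ⊆
      {q ∈ shortSteps n a k | diff a q.1 = t} := by
    intro t _ q hq
    obtain ⟨hq, hshort⟩ := mem_filter.mp hq
    obtain ⟨hq1, hq2, -, -⟩ := mem_steps.mp hq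
    obtain ⟨hlt1, hlt2⟩ := h.lt_of_mem_steps hq
    simp only [shortSteps, mem_filter, mem_product]
    exact ⟨⟨⟨(mem_reps.mp hq1).1, (mem_reps.mp hq2).1⟩,
      (mem_reps.mp hq2).2.trans (mem_reps.mp hq1).2.symm, hlt1, hlt2, hshort⟩,
      (mem_reps.mp hq1).2⟩
  calc #H = ∑ t ∈ T, #{w ∈ H | diff a w = t} :=
        card_eq_sum_card_fiberwise fun w hw => mem_image_of_mem _ hw
    _ ≤ ∑ t ∈ T, #(reps n a t) := sum_le_sum fun t _ =>
        card_le_card (filter_subset_filter _ (filter_subset _ _))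
    _ ≤ ∑ t ∈ T, 4 * #{q ∈ shortSteps n a k | diff a q.1 = t} := sum_le_sum fun t ht =>
        (h.card_reps_le_four_mul_card_short_steps hk (hT t ht)).trans
          (Nat.mul_le_mul_left 4 (card_le_card (hfiber t ht)))
    _ = 4 * #{q ∈ shortSteps n a k | diff a q.1 ∈ T} := by
        rw [← mul_sum, sum_card_fiberwise_eq_card_filter]
    _ ≤ 4 * #(shortSteps n a k) := Nat.mul_le_mul_left 4 (card_filter_le _ _)

end IsConvexSeq

noncomputable def eqDiffPairs (n : ℕ) (a : ℕ → ℝ) : Finset ((ℕ × ℕ) × (ℕ × ℕ)) :=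
  {q ∈ chords n ×ˢ chords n | diff a q.1 = diff a q.2}

noncomputable def sumQuads (n : ℕ) (a : ℕ → ℝ) : Finset ((ℕ × ℕ) × (ℕ × ℕ)) :=
  {p ∈ (range n ×ˢ range n) ×ˢ (range n ×ˢ range n) | a p.1.1 + a p.1.2 = a p.2.1 + a p.2.2}

section Counting

variable {n : ℕ} {a : ℕ → ℝ}

theorem card_chords_le (n : ℕ) : #(chords n) ≤ n ^ 2 := by
  rw [chords]
  simpa [sq] using card_filter_le (range n ×ˢ range n) fun w : ℕ × ℕ => w.1 < w.2

theorem card_eqDiffPairs (n : ℕ) (a : ℕ → ℝ) :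
    #(eqDiffPairs n a) = ∑ w ∈ chords n, mult n a w := by
  rw [eqDiffPairs, card_filter, sum_product]
  refine sum_congr rfl fun w _ => ?_
  rw [mult, reps, card_filter]
  simp only [eq_comm]

theorem swap_mem_sumQuads {p : (ℕ × ℕ) × (ℕ × ℕ)} (hp : p ∈ sumQuads n a) :
    p.swap ∈ sumQuads n a := by
  simp only [sumQuads, mem_filter, mem_product, Prod.fst_swap, Prod.snd_swap] at hp ⊢
  exact ⟨⟨hp.1.2, hp.1.1⟩, hp.2.symm⟩

theorem mem_eqDiffPairs_of_mem_sumQuads (hmono : StrictMonoOn a (Set.Iio n))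
    {p : (ℕ × ℕ) × (ℕ × ℕ)} (hp : p ∈ sumQuads n a) (hlt : p.1.1 < p.2.1) :
    ((p.1.1, p.2.1), (p.2.2, p.1.2)) ∈ eqDiffPairs n a := by
  simp only [sumQuads, mem_filter, mem_product, mem_range] at hp
  obtain ⟨⟨⟨h1, h2⟩, h3, h4⟩, hsum⟩ := hp
  have : a p.2.1 - a p.1.1 = a p.1.2 - a p.2.2 := by linarith
  have hlt' : p.2.2 < p.1.2 := (hmono.lt_iff_lt (by simpa) (by simpa)).mp
    (by linarith [hmono (by simpa using h1) (by simpa using h3) hlt])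
  rw [eqDiffPairs, mem_filter]
  simp only [diff, mem_product, mem_chords]
  exact ⟨⟨⟨hlt, h3⟩, hlt', h2⟩, this⟩

theorem card_sumQuads_le_sq_add_two_mul (hmono : StrictMonoOn a (Set.Iio n)) :
    #(sumQuads n a) ≤ n ^ 2 + 2 * #(eqDiffPairs n a) := by
  set S := sumQuads n a
  have hsplit :
      S ⊆ {p ∈ S | p.1.1 = p.2.1} ∪ {p ∈ S | p.1.1 < p.2.1} ∪ {p ∈ S | p.2.1 < p.1.1} := by
    intro p hp
    simp only [mem_union, mem_filter, hp, true_and]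
    omega
  have hdiag : #{p ∈ S | p.1.1 = p.2.1} ≤ n ^ 2 := by
    have hsnd : ∀ p ∈ {p ∈ S | p.1.1 = p.2.1}, p.2 = p.1 := by
      intro p hp
      simp only [S, sumQuads, mem_filter, mem_product, mem_range] at hp
      obtain ⟨⟨⟨⟨h1, h2⟩, h3, h4⟩, hsum⟩, heq⟩ := hp
      rw [heq, add_left_cancel_iff] at hsum
      exact Prod.ext heq.symm (hmono.injOn (by simpa) (by simpa) hsum.symm)
    refine (card_le_card_of_injOn Prod.fst (t := range n ×ˢ range n) (fun p hp => ?_)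
      fun p hp p' hp' he => Prod.ext he ?_).trans (by simp [sq])
    · exact (mem_product.mp (mem_filter.mp (mem_filter.mp hp).1).1).1
    · rw [hsnd p hp, hsnd p' hp', he]
  have hlt : #{p ∈ S | p.1.1 < p.2.1} ≤ #(eqDiffPairs n a) :=
    card_le_card_of_injOn (fun p => ((p.1.1, p.2.1), (p.2.2, p.1.2)))
      (fun p hp => mem_eqDiffPairs_of_mem_sumQuads hmono (mem_filter.mp hp).1 (mem_filter.mp hp).2)
      fun p _ p' _ he => by simp only [Prod.mk.injEq] at he; ext <;> simp [he]
  have hgt : #{p ∈ S | p.2.1 < p.1.1} ≤ #(eqDiffPairs n a) :=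
    card_le_card_of_injOn (fun p => ((p.2.1, p.1.1), (p.1.2, p.2.2)))
      (fun p hp => mem_eqDiffPairs_of_mem_sumQuads hmono (swap_mem_sumQuads (mem_filter.mp hp).1)
        (mem_filter.mp hp).2)
      fun p _ p' _ he => by simp only [Prod.mk.injEq] at he; ext <;> simp [he]
  have := (card_le_card hsplit).trans ((card_union_le _ _).trans
    (Nat.add_le_add_right (card_union_le _ _) _))
  omega

theorem card_energy_le_card_sumQuads {A : Finset ℝ} (hA : A = (range n).image a) :
    #{p ∈ (A ×ˢ A) ×ˢ (A ×ˢ A) | p.1.1 + p.1.2 = p.2.1 + p.2.2} ≤ #(sumQuads n a) := by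
  refine le_trans (card_le_card fun ⟨⟨x, y⟩, z, w⟩ hx => ?_)
    (card_image_le (f := fun p => ((a p.1.1, a p.1.2), (a p.2.1, a p.2.2))))
  simp only [hA, mem_filter, mem_product, mem_image, mem_range] at hx
  obtain ⟨⟨⟨⟨i, hi, rfl⟩, ⟨j, hj, rfl⟩⟩, ⟨k, hk, rfl⟩, ⟨l, hl, rfl⟩⟩, hsum⟩ := hx
  exact mem_image.mpr ⟨((i, j), (k, l)), by simp [sumQuads, *], rfl⟩

end Counting

/-- Split at `K = ⌊√n⌋`: the first `K` terms are at most `n²` each, and the tail is at most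
`C n³ ∑_{k > K} k⁻² ≤ 2 C n³ / (K + 1)`. -/
theorem sum_Icc_le_of_le_sq_of_le_div_sq (f : ℕ → ℝ) (n : ℕ) {C : ℝ} (hC : 0 ≤ C)
    (hsmall : ∀ k, f k ≤ n ^ 2) (hlarge : ∀ k, 2 ≤ k → f k ≤ C * n ^ 3 / k ^ 2) :
    ∑ k ∈ Icc 1 n, f k ≤ (1 + 2 * C) * √n ^ 5 := by
  set K := Nat.sqrt n
  set s := √(n : ℝ)
  have hs : s ^ 2 = n := Real.sq_sqrt (Nat.cast_nonneg n)
  have hs0 : 0 ≤ s := Real.sqrt_nonneg _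
  have hKs : (K : ℝ) ≤ s := Real.nat_sqrt_le_real_sqrt
  have hsK : s < K + 1 := Real.real_sqrt_lt_nat_sqrt_succ
  have hhead : ∑ k ∈ Ioc 0 K, f k ≤ s ^ 5 :=
    calc ∑ k ∈ Ioc 0 K, f k ≤ #(Ioc 0 K) • ((n : ℝ) ^ 2) :=
          sum_le_card_nsmul _ _ _ fun k _ => hsmall k
      _ = K * s ^ 4 := by rw [Nat.card_Ioc, Nat.sub_zero, nsmul_eq_mul, ← hs]; ring
      _ ≤ s * s ^ 4 := by gcongr
      _ = s ^ 5 := by ring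
  have htail : ∑ k ∈ Ioc K n, f k ≤ 2 * C * s ^ 5 :=
    calc ∑ k ∈ Ioc K n, f k ≤ ∑ k ∈ Ioc K n, C * n ^ 3 * ((k : ℝ) ^ 2)⁻¹ :=
          sum_le_sum fun k hk => by
            have : 0 < K := Nat.sqrt_pos.mpr (by simp at hk; omega)
            simpa [div_eq_mul_inv] using hlarge k (by simp at hk; omega)
      _ = C * n ^ 3 * ∑ k ∈ Ioo K (n + 1), ((k : ℝ) ^ 2)⁻¹ := by
          rw [mul_sum, Ioo_add_one_right_eq_Ioc]
      _ ≤ C * n ^ 3 * (2 / (K + 1)) := by gcongr; exact sum_Ioo_inv_sq_le _ _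
      _ ≤ 2 * C * s ^ 5 := by
          rw [← hs, mul_div_assoc', div_le_iff₀ (by positivity)]
          have : s ^ 6 ≤ s ^ 5 * (K + 1) := by
            rw [pow_succ]; gcongr
          nlinarith [pow_nonneg hs0 5]
  have hsplit : ∑ k ∈ Ioc 0 K, f k + ∑ k ∈ Ioc K n, f k = ∑ k ∈ Icc 1 n, f k := by
    rw [sum_Ioc_consecutive f (Nat.zero_le K) (Nat.sqrt_le_self n), ← Icc_add_one_left_eq_Ioc,
      zero_add]
  linarith

namespace IsConvexSeq

variable {n : ℕ} {a : ℕ → ℝ}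

theorem card_mult_ge_le_div_sq (h : IsConvexSeq n a) {k : ℕ} (hk : 2 ≤ k) :
    (#{w ∈ chords n | k ≤ mult n a w} : ℝ) ≤ 256 * n ^ 3 / k ^ 2 := by
  have hk0 : (0 : ℝ) < k := by exact_mod_cast (by omega : 0 < k)
  calc (#{w ∈ chords n | k ≤ mult n a w} : ℝ) ≤ 4 * (n * ((8 * n / k : ℕ) : ℝ) ^ 2) := by
        exact_mod_cast (h.card_mult_ge_le hk).trans
          (Nat.mul_le_mul_left 4 (h.card_shortSteps_le (by omega)))
    _ ≤ 4 * (n * (8 * n / k) ^ 2) := by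
        gcongr
        exact_mod_cast Nat.cast_div_le
    _ = 256 * n ^ 3 / k ^ 2 := by field_simp; ring

theorem card_sumQuads_le (h : IsConvexSeq n a) : (#(sumQuads n a) : ℝ) ≤ 1027 * √n ^ 5 := by
  have hsum := sum_Icc_le_of_le_sq_of_le_div_sq
    (fun k => (#{w ∈ chords n | k ≤ mult n a w} : ℝ)) n (by norm_num : (0 : ℝ) ≤ 256)
    (fun k => by exact_mod_cast (card_filter_le _ _).trans (card_chords_le n))
    (fun k hk => h.card_mult_ge_le_div_sq hk)
  have hpairs : (#(eqDiffPairs n a) : ℝ) =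
      ∑ k ∈ Icc 1 n, (#{w ∈ chords n | k ≤ mult n a w} : ℝ) := by
    rw [card_eqDiffPairs,
      sum_eq_sum_card_filter_le (chords n) (mult n a) fun w _ => h.card_reps_le (diff a w)]
    push_cast
    rfl
  have hquads : (#(sumQuads n a) : ℝ) ≤ n ^ 2 + 2 * #(eqDiffPairs n a) := by
    exact_mod_cast card_sumQuads_le_sq_add_two_mul h.strictMonoOn
  have hsq : (n : ℝ) ^ 2 ≤ √n ^ 5 := by
    rcases n.eq_zero_or_pos with rfl | hn
    · simp
    · calc (n : ℝ) ^ 2 = √n ^ 4 := by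
            rw [show 4 = 2 * 2 from rfl, pow_mul, Real.sq_sqrt (Nat.cast_nonneg n)]
        _ ≤ √n ^ 5 :=
            pow_le_pow_right₀ (Real.one_le_sqrt.mpr (by exact_mod_cast hn)) (by norm_num)
  linarith

end IsConvexSeq

end ConvexEnergy

/-- Konyagin–Garaev: for a convex set `A` of `N` reals,
`E(A) ≤ C N^{5/2}`. -/
theorem stmt11 :
    ∃ C : ℝ, 0 < C ∧ ∀ A : Finset ℝ, IsConvexFinset A →
      ((((A ×ˢ A) ×ˢ (A ×ˢ A)).filter
          (fun p => p.1.1 + p.1.2 = p.2.1 + p.2.2)).card : ℝ) ≤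
        C * (A.card : ℝ) ^ ((5 : ℝ) / 2) := by
  refine ⟨1027, by norm_num, fun A ⟨a, hlt, hstep, hA⟩ => ?_⟩
  have h : ConvexEnergy.IsConvexSeq A.card a := ⟨fun i _ j hj hij => hlt i j hij hj, hstep⟩
  have hpow : (A.card : ℝ) ^ ((5 : ℝ) / 2) = √(A.card : ℝ) ^ 5 := by
    rw [Real.sqrt_eq_rpow, ← Real.rpow_mul_natCast (Nat.cast_nonneg _)]
    norm_num
  rw [hpow]
  exact (Nat.cast_le.mpr (ConvexEnergy.card_energy_le_card_sumQuads hA)).trans h.card_sumQuads_le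
end

section
/- Let A, B, C be convex sets of reals, each with N elements. Then the number of solutions to a + b = c with a ∈ A, b ∈ B, c ∈ C is at most C' · N^{5/3} for an absolute constant C'. -/
open Finset

/-!
Write `B = {b₀ < ⋯ < b_{N-1}}` and `D = {d₀ < ⋯ < d_{N-1}}`. For a translate `x`, the indices `j`
with `x + b_j ∈ D` form a chain, and along it the index `κ` with `d_κ = x + b_j` increases. Few
steps of such a chain inside `[0, N)` can be longer than `M`, so if `x + B` meets `D` in
`τ ≥ 4` points, at least `τ / 2` steps `j → j⁺` have `B`-gap and `D`-gap both at most
`M ≈ 8N / τ`. Since `D` is convex, a difference `d_{κ+q} - d_κ` with `q` fixed determines `κ`;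
hence `(j, j⁺ - j, q)` determines the translate `x`, and at most `128 N³ / τ³` translates are
`τ`-rich. Counting solutions layer by layer, with the trivial bound `|A|` for the layers
`τ ≤ K` and the rich bound above, gives `O(N K + N³ / K²)`, which is `O(N^{5/3})` for
`K ≈ N^{2/3}`.
-/

/-- The least element of `J` above `j`, or `j` itself if there is none. -/
def nextIn (J : Finset ℕ) (j : ℕ) : ℕ :=
  if h : {x ∈ J | j < x}.Nonempty then {x ∈ J | j < x}.min' h else j

section NextIn

variable {J : Finset ℕ} {j x : ℕ}

lemma nextIn_mem (h : j < nextIn J j) : nextIn J j ∈ J := by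
  unfold nextIn at *
  split_ifs at * with hne
  · exact (mem_filter.1 (min'_mem _ hne)).1
  · exact absurd h (lt_irrefl j)

lemma nextIn_le (hx : x ∈ J) (hjx : j < x) : nextIn J j ≤ x := by
  have hmem : x ∈ {y ∈ J | j < y} := mem_filter.2 ⟨hx, hjx⟩
  rw [nextIn, dif_pos ⟨x, hmem⟩]
  exact min'_le _ _ hmem

lemma lt_nextIn (hx : x ∈ J) (hjx : j < x) : j < nextIn J j := by
  have hne : {y ∈ J | j < y}.Nonempty := ⟨x, mem_filter.2 ⟨hx, hjx⟩⟩
  rw [nextIn, dif_pos hne]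
  exact (mem_filter.1 (min'_mem _ hne)).2

lemma card_le_card_filter_lt_nextIn_add_one (J : Finset ℕ) :
    #J ≤ #{j ∈ J | j < nextIn J j} + 1 := by
  have hlast : #{j ∈ J | ¬ j < nextIn J j} ≤ 1 := by
    refine card_le_one.2 fun x hx y hy => ?_
    simp only [mem_filter] at hx hy
    by_contra hne
    rcases Nat.lt_or_gt_of_ne hne with h | h
    · exact hx.2 (lt_nextIn hy.1 h)
    · exact hy.2 (lt_nextIn hx.1 h)
  have := card_filter_add_card_filter_not (s := J) (fun j => j < nextIn J j)
  omega

lemma card_filter_gap_gt_mul_le {f : ℕ → ℕ} {N : ℕ} (hf : MonotoneOn f J)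
    (hfN : ∀ j ∈ J, f j ≤ N) (M : ℕ) :
    (M + 1) * #{j ∈ J | j < nextIn J j ∧ M < f (nextIn J j) - f j} ≤ N := by
  set G := {j ∈ J | j < nextIn J j ∧ M < f (nextIn J j) - f j}
  set I : ℕ → Finset ℕ := fun j => Ico (f j) (f (nextIn J j))
  have hdisj_of_lt : ∀ y ∈ G, ∀ z ∈ G, y < z → Disjoint (I y) (I z) := by
    intro y hy z hz hyz
    simp only [G, mem_filter] at hy hz
    have : f (nextIn J y) ≤ f z := hf (nextIn_mem hy.2.1) hz.1 (nextIn_le hz.1 hyz)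
    exact disjoint_left.2 fun w hw hw' => by simp only [I, mem_Ico] at hw hw'; omega
  have hdisj : (G : Set ℕ).PairwiseDisjoint I := by
    intro y hy z hz hne
    rcases Nat.lt_or_gt_of_ne hne with h | h
    · exact hdisj_of_lt y hy z hz h
    · exact (hdisj_of_lt z hz y hy h).symm
  have hsub : G.biUnion I ⊆ range N := by
    intro w hw
    obtain ⟨y, hy, hw⟩ := mem_biUnion.1 hw
    simp only [G, mem_filter] at hy
    simp only [I, mem_Ico] at hw
    have := hfN _ (nextIn_mem hy.2.1)
    exact mem_range.2 (by omega)
  calc (M + 1) * #G = #G • (M + 1) := by rw [smul_eq_mul, mul_comm]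
    _ ≤ ∑ y ∈ G, #(I y) := card_nsmul_le_sum _ _ _ fun y hy => by
        simp only [G, mem_filter] at hy
        simp only [I, Nat.card_Ico]
        omega
    _ = #(G.biUnion I) := (card_biUnion hdisj).symm
    _ ≤ N := by simpa using card_le_card hsub

def shortSteps (J : Finset ℕ) (f : ℕ → ℕ) (M : ℕ) : Finset ℕ :=
  {j ∈ J | j < nextIn J j ∧ nextIn J j - j ≤ M ∧ f (nextIn J j) - f j ≤ M}

lemma card_mul_le_card_shortSteps {f : ℕ → ℕ} {N : ℕ} (hf : MonotoneOn f J)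
    (hJN : ∀ j ∈ J, j ≤ N) (hfN : ∀ j ∈ J, f j ≤ N) (M : ℕ) :
    (M + 1) * #J ≤ (M + 1) * (#(shortSteps J f M) + 1) + 2 * N := by
  have hcover : {j ∈ J | j < nextIn J j} ⊆ shortSteps J f M ∪
      ({j ∈ J | j < nextIn J j ∧ M < nextIn J j - j} ∪
        {j ∈ J | j < nextIn J j ∧ M < f (nextIn J j) - f j}) := by
    intro j hj
    simp only [shortSteps, mem_union, mem_filter] at hj ⊢
    simp only [hj, true_and]
    omega
  have hid := card_filter_gap_gt_mul_le (f := id) monotoneOn_id hJN M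
  have hgap := card_filter_gap_gt_mul_le hf hfN M
  have hcard := (card_le_card hcover).trans
    ((card_union_le _ _).trans (Nat.add_le_add_left (card_union_le _ _) _))
  have hlast := card_le_card_filter_lt_nextIn_add_one J
  simp only [id] at hid
  nlinarith

end NextIn

lemma strictMonoOn_sub_shift {N : ℕ} {d : ℕ → ℝ}
    (hconv : ∀ i, i + 2 < N → d (i + 1) - d i < d (i + 2) - d (i + 1)) {q : ℕ} (hq : 0 < q) :
    StrictMonoOn (fun κ => d (κ + q) - d κ) (Set.Iio (N - q)) := by
  have hstep : StrictMonoOn (fun m => d (m + 1) - d m) (Set.Iio (N - 1)) :=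
    strictMonoOn_of_lt_succ Set.ordConnected_Iio fun m _ _ hm => by
      simp only [Order.succ_eq_add_one, Set.mem_Iio] at hm ⊢
      exact hconv m (by omega)
  have htel : ∀ κ, d (κ + q) - d κ = ∑ l ∈ range q, (d (κ + l + 1) - d (κ + l)) := fun κ => by
    simpa [add_assoc] using (sum_range_sub (fun l => d (κ + l)) q).symm
  intro κ _ κ' hκ' hκκ'
  simp only [Set.mem_Iio] at hκ'
  simp only [htel]
  exact sum_lt_sum_of_nonempty (nonempty_range_iff.2 hq.ne') fun l hl => by
    simp only [mem_range] at hl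
    exact hstep (by simp only [Set.mem_Iio]; omega) (by simp only [Set.mem_Iio]; omega)
      (by omega)

lemma sum_eq_sum_Ioc_card_filter_le {α : Type*} (s : Finset α) (R : α → ℕ) {L : ℕ}
    (hR : ∀ x ∈ s, R x ≤ L) :
    ∑ x ∈ s, R x = ∑ τ ∈ Ioc 0 L, #{x ∈ s | τ ≤ R x} := by
  calc ∑ x ∈ s, R x = ∑ x ∈ s, ∑ τ ∈ Ioc 0 L, if τ ≤ R x then 1 else 0 :=
        sum_congr rfl fun x hx => by
          rw [← card_filter, show {τ ∈ Ioc 0 L | τ ≤ R x} = Ioc 0 (R x) by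
            ext τ; simp only [mem_filter, mem_Ioc]; have := hR x hx; omega]
          simp
    _ = ∑ τ ∈ Ioc 0 L, #{x ∈ s | τ ≤ R x} := by
        rw [sum_comm]
        simp only [card_filter]

lemma sum_Ioc_inv_pow_three_le (K L : ℕ) :
    ∑ τ ∈ Ioc K L, ((τ : ℝ) ^ 3)⁻¹ ≤ 2 / ((K : ℝ) + 1) ^ 2 := by
  have hterm : ∀ τ ∈ Ioc K L, ((τ : ℝ) ^ 3)⁻¹ ≤ ((K : ℝ) + 1)⁻¹ * ((τ : ℝ) ^ 2)⁻¹ := by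
    intro τ hτ
    have hKτ : (K : ℝ) + 1 ≤ τ := by exact_mod_cast (mem_Ioc.1 hτ).1
    have hτ : (0 : ℝ) < τ := by linarith
    rw [← mul_inv, pow_succ']
    exact inv_anti₀ (by positivity) (by gcongr)
  calc _ ≤ ∑ τ ∈ Ioo K (L + 1), ((K : ℝ) + 1)⁻¹ * ((τ : ℝ) ^ 2)⁻¹ := by
        rw [show Ioo K (L + 1) = Ioc K L by ext; simp only [mem_Ioo, mem_Ioc]; omega]
        exact sum_le_sum hterm
    _ ≤ ((K : ℝ) + 1)⁻¹ * (2 / ((K : ℝ) + 1)) := by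
        rw [← mul_sum]
        gcongr
        exact sum_Ioo_inv_sq_le K (L + 1)
    _ = 2 / ((K : ℝ) + 1) ^ 2 := by field_simp

noncomputable def hits (N : ℕ) (b d : ℕ → ℝ) (x : ℝ) : Finset ℕ :=
  {j ∈ range N | x + b j ∈ (range N).image d}

noncomputable def hitIndex (N : ℕ) (b d : ℕ → ℝ) (x : ℝ) (j : ℕ) : ℕ :=
  Function.invFunOn d (Set.Iio N) (x + b j)

section Hits

variable {N : ℕ} {b d : ℕ → ℝ} {x : ℝ} {j : ℕ}

lemma lt_of_mem_hits (hj : j ∈ hits N b d x) : j < N :=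
  mem_range.1 (mem_filter.1 hj).1

lemma hitIndex_lt_and_eq (hj : j ∈ hits N b d x) :
    hitIndex N b d x j < N ∧ d (hitIndex N b d x j) = x + b j := by
  obtain ⟨κ, hκ, hdκ⟩ := mem_image.1 (mem_filter.1 hj).2
  have h : ∃ κ ∈ Set.Iio N, d κ = x + b j := ⟨κ, mem_range.1 hκ, hdκ⟩
  exact ⟨Function.invFunOn_mem h, Function.invFunOn_eq h⟩

lemma card_filter_add_mem_eq_sum_card_hits (hb : StrictMonoOn b (Set.Iio N)) (A : Finset ℝ) :
    #{p ∈ A ×ˢ (range N).image b | p.1 + p.2 ∈ (range N).image d} = ∑ x ∈ A, #(hits N b d x) := by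
  rw [card_filter, sum_product]
  refine sum_congr rfl fun x _ => ?_
  rw [← card_filter, filter_image, card_image_of_injOn (hb.injOn.mono fun j hj => ?_)]
  · rfl
  · exact mem_range.1 (mem_filter.1 hj).1

lemma strictMonoOn_hitIndex (hb : StrictMonoOn b (Set.Iio N)) (hd : StrictMonoOn d (Set.Iio N)) :
    StrictMonoOn (hitIndex N b d x) (hits N b d x) := by
  intro j hj j' hj' hjj'
  obtain ⟨hκ, hdκ⟩ := hitIndex_lt_and_eq hj
  obtain ⟨hκ', hdκ'⟩ := hitIndex_lt_and_eq hj'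
  have : b j < b j' := hb (lt_of_mem_hits hj) (lt_of_mem_hits hj') hjj'
  exact (hd.lt_iff_lt hκ hκ').1 (by rw [hdκ, hdκ']; linarith)

lemma eq_of_hitIndex_gap_eq (hb : StrictMonoOn b (Set.Iio N)) (hd : StrictMonoOn d (Set.Iio N))
    (hconv : ∀ i, i + 2 < N → d (i + 1) - d i < d (i + 2) - d (i + 1)) {x' : ℝ}
    (hj : j ∈ hits N b d x) (hj' : j ∈ hits N b d x') (hlt : j < nextIn (hits N b d x) j)
    (hnext : nextIn (hits N b d x) j = nextIn (hits N b d x') j)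
    (hgap : hitIndex N b d x (nextIn (hits N b d x) j) - hitIndex N b d x j =
      hitIndex N b d x' (nextIn (hits N b d x') j) - hitIndex N b d x' j) :
    x = x' := by
  set n := nextIn (hits N b d x) j
  have hn : n ∈ hits N b d x := nextIn_mem hlt
  have hn' : n ∈ hits N b d x' := hnext ▸ nextIn_mem (hnext ▸ hlt)
  rw [← hnext] at hgap
  obtain ⟨hkj, hdkj⟩ := hitIndex_lt_and_eq hj
  obtain ⟨hk'j, hdk'j⟩ := hitIndex_lt_and_eq hj'
  obtain ⟨hkn, hdkn⟩ := hitIndex_lt_and_eq hn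
  obtain ⟨hk'n, hdk'n⟩ := hitIndex_lt_and_eq hn'
  set k := hitIndex N b d x
  set k' := hitIndex N b d x'
  have hkk : k j < k n := strictMonoOn_hitIndex hb hd hj hn hlt
  have hkk' : k' j < k' n := strictMonoOn_hitIndex hb hd hj' hn' hlt
  set q := k n - k j
  have hwindow : d (k j + q) - d (k j) = d (k' j + q) - d (k' j) := by
    rw [show k j + q = k n by omega, show k' j + q = k' n by omega, hdkj, hdk'j, hdkn, hdk'n]
    ring
  have hkeq : k j = k' j :=
    (strictMonoOn_sub_shift hconv (by omega : 0 < q)).injOn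
      (by simp only [Set.mem_Iio]; omega) (by simp only [Set.mem_Iio]; omega) hwindow
  rw [hkeq, hdk'j] at hdkj
  linarith

lemma sum_card_shortSteps_le (hb : StrictMonoOn b (Set.Iio N)) (hd : StrictMonoOn d (Set.Iio N))
    (hconv : ∀ i, i + 2 < N → d (i + 1) - d i < d (i + 2) - d (i + 1)) (A : Finset ℝ) (M : ℕ) :
    ∑ x ∈ A, #(shortSteps (hits N b d x) (hitIndex N b d x) M) ≤ N * (M * M) := by
  rw [← card_sigma]
  let profile : (_ : ℝ) × ℕ → ℕ × ℕ × ℕ := fun p =>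
    (p.2, nextIn (hits N b d p.1) p.2 - p.2,
      hitIndex N b d p.1 (nextIn (hits N b d p.1) p.2) - hitIndex N b d p.1 p.2)
  have hmem : ∀ x j, (⟨x, j⟩ : (_ : ℝ) × ℕ) ∈ A.sigma (fun x => shortSteps (hits N b d x)
      (hitIndex N b d x) M) → j ∈ hits N b d x ∧ j < nextIn (hits N b d x) j ∧
        nextIn (hits N b d x) j - j ≤ M ∧
        hitIndex N b d x (nextIn (hits N b d x) j) - hitIndex N b d x j ≤ M :=
    fun x j hp => by simpa [shortSteps] using (mem_sigma.1 hp).2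
  calc _ ≤ #(range N ×ˢ (Icc 1 M ×ˢ Icc 1 M)) := by
        refine card_le_card_of_injOn profile (fun ⟨x, j⟩ hp => ?_)
          (fun ⟨x, j⟩ hp ⟨x', j'⟩ hp' heq => ?_)
        · obtain ⟨hj, hlt, hgapj, hgapk⟩ := hmem x j hp
          have := strictMonoOn_hitIndex hb hd hj (nextIn_mem hlt) hlt
          simp only [profile, coe_product, Set.mem_prod, mem_coe, mem_range, mem_Icc]
          exact ⟨lt_of_mem_hits hj, ⟨by omega, hgapj⟩, ⟨by omega, hgapk⟩⟩
        · obtain ⟨hj, hlt, -⟩ := hmem x j hp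
          obtain ⟨hj', hlt', -⟩ := hmem x' j' hp'
          obtain ⟨hjj', hnext, hgap⟩ := Prod.ext_iff.1 heq |>.imp_right Prod.ext_iff.1
          dsimp only [profile] at hjj' hnext hgap
          subst hjj'
          have hn : nextIn (hits N b d x) j = nextIn (hits N b d x') j := by omega
          rw [eq_of_hitIndex_gap_eq hb hd hconv hj hj' hlt hn hgap]
    _ = N * (M * M) := by simp

theorem card_rich_mul_pow_three_le (hb : StrictMonoOn b (Set.Iio N))
    (hd : StrictMonoOn d (Set.Iio N))
    (hconv : ∀ i, i + 2 < N → d (i + 1) - d i < d (i + 2) - d (i + 1))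
    (A : Finset ℝ) {τ : ℕ} (hτ : 4 ≤ τ) :
    #{x ∈ A | τ ≤ #(hits N b d x)} * τ ^ 3 ≤ 128 * N ^ 3 := by
  -- with this `M`, the at most `2N / (M + 1)` long steps are fewer than `τ / 4`
  set M := 8 * N / τ
  have hMτ : M * τ ≤ 8 * N := Nat.div_mul_le_self _ _
  have hτM : 8 * N < τ * (M + 1) := Nat.lt_mul_div_succ _ (by omega)
  have hshort : ∀ x ∈ {x ∈ A | τ ≤ #(hits N b d x)},
      τ ≤ 2 * #(shortSteps (hits N b d x) (hitIndex N b d x) M) := by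
    intro x hx
    have hrich := (mem_filter.1 hx).2
    have := card_mul_le_card_shortSteps (strictMonoOn_hitIndex (x := x) hb hd).monotoneOn
      (fun j hj => (lt_of_mem_hits hj).le) (fun j hj => (hitIndex_lt_and_eq hj).1.le) M
    nlinarith
  have hsum : #{x ∈ A | τ ≤ #(hits N b d x)} * τ ≤ 2 * (N * (M * M)) :=
    calc _ = ∑ _x ∈ {x ∈ A | τ ≤ #(hits N b d x)}, τ := by rw [sum_const, smul_eq_mul]
      _ ≤ ∑ x ∈ {x ∈ A | τ ≤ #(hits N b d x)},
          2 * #(shortSteps (hits N b d x) (hitIndex N b d x) M) := sum_le_sum hshort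
      _ ≤ 2 * (N * (M * M)) := by
        rw [← mul_sum]
        exact Nat.mul_le_mul_left 2 (sum_card_shortSteps_le hb hd hconv _ M)
  calc _ = #{x ∈ A | τ ≤ #(hits N b d x)} * τ * τ ^ 2 := by ring
    _ ≤ 2 * N * (M * τ) ^ 2 := by nlinarith
    _ ≤ 2 * N * (8 * N) ^ 2 := by gcongr
    _ = 128 * N ^ 3 := by ring

theorem sum_card_hits_le (hb : StrictMonoOn b (Set.Iio N)) (hd : StrictMonoOn d (Set.Iio N))
    (hconv : ∀ i, i + 2 < N → d (i + 1) - d i < d (i + 2) - d (i + 1))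
    {A : Finset ℝ} (hA : #A ≤ N) {K : ℕ} (hK : 3 ≤ K) :
    (∑ x ∈ A, #(hits N b d x) : ℝ) ≤ K * N + 256 * N ^ 3 / ((K : ℝ) + 1) ^ 2 := by
  have hsplit := sum_eq_sum_Ioc_card_filter_le A (fun x => #(hits N b d x)) (L := K + N)
    fun x _ => (card_le_card (filter_subset _ _)).trans (by simp)
  rw [← sum_Ioc_consecutive _ (Nat.zero_le K) (Nat.le_add_right K N)] at hsplit
  have hhead : ∑ τ ∈ Ioc 0 K, #{x ∈ A | τ ≤ #(hits N b d x)} ≤ K * N :=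
    calc _ ≤ ∑ _τ ∈ Ioc 0 K, N := sum_le_sum fun τ _ => (card_filter_le _ _).trans hA
      _ = K * N := by simp
  have htail : ∀ τ ∈ Ioc K (K + N),
      (#{x ∈ A | τ ≤ #(hits N b d x)} : ℝ) ≤ 128 * N ^ 3 * ((τ : ℝ) ^ 3)⁻¹ := by
    intro τ hτ
    have hτK := (mem_Ioc.1 hτ).1
    have hpos : (0 : ℝ) < τ := by exact_mod_cast (by omega : 0 < τ)
    rw [le_mul_inv_iff₀ (by positivity)]
    exact_mod_cast card_rich_mul_pow_three_le hb hd hconv A (by omega : 4 ≤ τ)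
  calc (∑ x ∈ A, #(hits N b d x) : ℝ)
      = ∑ τ ∈ Ioc 0 K, (#{x ∈ A | τ ≤ #(hits N b d x)} : ℝ) +
        ∑ τ ∈ Ioc K (K + N), (#{x ∈ A | τ ≤ #(hits N b d x)} : ℝ) := by exact_mod_cast hsplit
    _ ≤ K * N + ∑ τ ∈ Ioc K (K + N), 128 * N ^ 3 * ((τ : ℝ) ^ 3)⁻¹ := by
        gcongr ?_ + ?_
        · exact_mod_cast hhead
        · exact sum_le_sum htail
    _ ≤ K * N + 128 * N ^ 3 * (2 / ((K : ℝ) + 1) ^ 2) := by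
        rw [← mul_sum]
        gcongr
        exact sum_Ioc_inv_pow_three_le K (K + N)
    _ = K * N + 256 * N ^ 3 / ((K : ℝ) + 1) ^ 2 := by ring

theorem sum_card_hits_le_rpow (hb : StrictMonoOn b (Set.Iio N)) (hd : StrictMonoOn d (Set.Iio N))
    (hconv : ∀ i, i + 2 < N → d (i + 1) - d i < d (i + 2) - d (i + 1))
    {A : Finset ℝ} (hA : #A ≤ N) :
    (∑ x ∈ A, #(hits N b d x) : ℝ) ≤ 260 * (N : ℝ) ^ ((5 : ℝ) / 3) := by
  rcases Nat.eq_zero_or_pos N with rfl | hN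
  · simp [hits]
  set t := (N : ℝ) ^ ((1 : ℝ) / 3)
  have ht1 : 1 ≤ t := Real.one_le_rpow (by exact_mod_cast hN) (by norm_num)
  have hpow : ∀ n : ℕ, t ^ n = (N : ℝ) ^ ((n : ℝ) / 3) := fun n => by
    rw [← Real.rpow_natCast, ← Real.rpow_mul (Nat.cast_nonneg N)]
    ring_nf
  have hN3 : (N : ℝ) = t ^ 3 := by rw [hpow]; norm_num
  set K := ⌊t ^ 2⌋₊ + 3
  have hKle : (K : ℝ) ≤ t ^ 2 + 3 := by
    simp only [K, Nat.cast_add, Nat.cast_ofNat]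
    linarith [Nat.floor_le (by positivity : 0 ≤ t ^ 2)]
  have hKge : t ^ 2 ≤ (K : ℝ) + 1 := by
    simp only [K, Nat.cast_add, Nat.cast_ofNat]
    linarith [Nat.lt_floor_add_one (t ^ 2)]
  have hhead : (K : ℝ) * N ≤ 4 * t ^ 5 := by
    rw [hN3]
    nlinarith [pow_le_pow_right₀ ht1 (by norm_num : 3 ≤ 5)]
  have htail : 256 * (N : ℝ) ^ 3 / ((K : ℝ) + 1) ^ 2 ≤ 256 * t ^ 5 := by
    rw [div_le_iff₀ (by positivity), hN3]
    have : t ^ 4 ≤ ((K : ℝ) + 1) ^ 2 := by nlinarith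
    nlinarith [pow_pos (by linarith : (0 : ℝ) < t) 5]
  calc _ ≤ K * N + 256 * N ^ 3 / ((K : ℝ) + 1) ^ 2 := sum_card_hits_le hb hd hconv hA (by omega)
    _ ≤ 260 * t ^ 5 := by linarith
    _ = 260 * (N : ℝ) ^ ((5 : ℝ) / 3) := by rw [hpow]; norm_num

end Hits

/-- for convex sets `A, B, D` of `N` reals each, the number of
solutions to `a + b = c` with `a ∈ A`, `b ∈ B`, `c ∈ D` is at most
`C' N^{5/3}`. -/
theorem stmt15 :
    ∃ C' : ℝ, 0 < C' ∧ ∀ (N : ℕ) (A B D : Finset ℝ),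
      IsConvexFinset A → IsConvexFinset B → IsConvexFinset D →
      A.card = N → B.card = N → D.card = N →
      (((A ×ˢ B).filter (fun p => p.1 + p.2 ∈ D)).card : ℝ) ≤
        C' * (N : ℝ) ^ ((5 : ℝ) / 3) := by
  refine ⟨260, by norm_num, fun N A B D _ hB hD hAN hBN hDN => ?_⟩
  obtain ⟨b, hb, -, hBb⟩ := hB
  obtain ⟨d, hd, hconv, hDd⟩ := hD
  rw [hBN] at hb hBb
  rw [hDN] at hd hconv hDd
  have hb' : StrictMonoOn b (Set.Iio N) := fun i _ j hj hij => hb i j hij hj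
  have hd' : StrictMonoOn d (Set.Iio N) := fun i _ j hj hij => hd i j hij hj
  rw [hBb, hDd, card_filter_add_mem_eq_sum_card_hits hb']
  push_cast
  exact sum_card_hits_le_rpow hb' hd' hconv hAN.le
end
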